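/- The sectional curvature of the coordinate plane spanned by ∂/∂α₁ and ∂/∂α₂ in the Freund manifold with its Fisher metric and Levi-Civita connection is identically zero. -/

import Mathlib

open Real

/-- Entries of the Fisher information metric of the Freund manifold, as
functions of the point `p = (α₁, β₁, α₂, β₂)` in `(0,∞)⁴`. -/
noncomputable def metF (i j : Fin 4) (p : Fin 4 → ℝ) : ℝ :=
  Matrix.diagonal
    ![1 / ((p 0) ^ 2 + p 0 * p 2),
      p 2 / ((p 1) ^ 2 * (p 0 + p 2)),
      1 / ((p 2) ^ 2 + p 0 * p 2),
      p 0 / ((p 3) ^ 2 * (p 0 + p 2))] i j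

/-- The metric as a matrix at `p`. -/
noncomputable def metM (p : Fin 4 → ℝ) : Matrix (Fin 4) (Fin 4) ℝ :=
  fun i j => metF i j p

/-- Partial derivative in the `i`-th coordinate. -/
noncomputable def pd (i : Fin 4) (F : (Fin 4 → ℝ) → ℝ) (p : Fin 4 → ℝ) : ℝ :=
  deriv (fun t => F (Function.update p i t)) (p i)

/-- Levi-Civita Christoffel symbols of the first kind. -/
noncomputable def lcLow (i j k : Fin 4) (p : Fin 4 → ℝ) : ℝ :=
  (pd i (metF j k) p + pd j (metF i k) p - pd k (metF i j) p) / 2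

/-- Levi-Civita Christoffel symbols of the second kind. -/
noncomputable def lcUp (h i j : Fin 4) (p : Fin 4 → ℝ) : ℝ :=
  ∑ k : Fin 4, (metM p)⁻¹ h k * lcLow i j k p

/-- Riemann curvature tensor `R^h_{ijk}` of the Levi-Civita connection. -/
noncomputable def riem (h i j k : Fin 4) (p : Fin 4 → ℝ) : ℝ :=
  pd i (lcUp h j k) p - pd j (lcUp h i k) p +
    ∑ l : Fin 4, (lcUp h i l p * lcUp l j k p - lcUp h j l p * lcUp l i k p)

/-- Sectional curvature of the coordinate 2-plane spanned by `∂_i` and `∂_j`. -/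
noncomputable def sec (i j : Fin 4) (p : Fin 4 → ℝ) : ℝ :=
  (∑ l : Fin 4, metF i l p * riem l i j j p) /
    (metF i i p * metF j j p - (metF i j p) ^ 2)

/-!
Substituting `α₁ = u²`, `α₂ = v²` turns the `(α₁, α₂)`-block of the Fisher metric into
`4 (du² + dv²) / (u² + v²)`, which in polar coordinates `(ρ, φ)` is `4 ((d log ρ)² + dφ²)`: a flat
cylinder. Since the metric is diagonal and this block does not depend on `β₁, β₂`, the
`β`-directions contribute no Christoffel terms to `R⁰₀₂₂`, which is therefore the curvature of
that flat surface.
-/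

open Function Filter Topology

lemma eventually_update_pos {ι : Type*} [DecidableEq ι] {p : ι → ℝ} (hp : ∀ j, 0 < p j)
    (i : ι) : ∀ᶠ t in 𝓝 (p i), ∀ j, 0 < update p i t j := by
  filter_upwards [lt_mem_nhds (hp i)] with t ht j
  rcases eq_or_ne j i with rfl | hji
  · simpa
  · simpa [update_of_ne hji] using hp j

lemma pd_eq_of_eventuallyEq {i : Fin 4} {F : (Fin 4 → ℝ) → ℝ} {p : Fin 4 → ℝ} {f : ℝ → ℝ}
    {f' : ℝ} (hF : (fun t => F (update p i t)) =ᶠ[𝓝 (p i)] f) (hf : HasDerivAt f f' (p i)) :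
    pd i F p = f' := by
  rw [pd, hF.deriv_eq, hf.deriv]

lemma pd_eq_zero_of_forall_update {i : Fin 4} {F : (Fin 4 → ℝ) → ℝ} {p : Fin 4 → ℝ}
    (hF : ∀ t, F (update p i t) = F p) : pd i F p = 0 :=
  pd_eq_of_eventuallyEq (.of_forall hF) (hasDerivAt_const _ _)

section Metric

variable {p : Fin 4 → ℝ}

lemma metF_of_ne {i j : Fin 4} (hij : i ≠ j) (p : Fin 4 → ℝ) : metF i j p = 0 :=
  Matrix.diagonal_apply_ne _ hij

lemma metF_comm (i j : Fin 4) (p : Fin 4 → ℝ) : metF i j p = metF j i p := by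
  rcases eq_or_ne i j with rfl | hij
  · rfl
  · rw [metF_of_ne hij, metF_of_ne hij.symm]

lemma metF_zero_zero (p : Fin 4 → ℝ) : metF 0 0 p = 1 / (p 0 ^ 2 + p 0 * p 2) := rfl

lemma metF_two_two (p : Fin 4 → ℝ) : metF 2 2 p = 1 / (p 2 ^ 2 + p 0 * p 2) := rfl

lemma metF_pos (hp : ∀ i, 0 < p i) (i : Fin 4) : 0 < metF i i p := by
  have := hp 0; have := hp 1; have := hp 2; have := hp 3
  rw [metF, Matrix.diagonal_apply_eq]
  fin_cases i <;> simp only [Fin.zero_eta, Fin.mk_one, Fin.reduceFinMk, Matrix.cons_val] <;> positivity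

lemma metM_inv_eq_diagonal (hp : ∀ i, 0 < p i) :
    (metM p)⁻¹ = Matrix.diagonal fun i => (metF i i p)⁻¹ := by
  refine Matrix.inv_eq_left_inv ?_
  ext i j
  rcases eq_or_ne i j with rfl | hij
  · simp [metM, Matrix.mul_apply, Matrix.diagonal_apply, (metF_pos hp i).ne']
  · simp [metM, Matrix.mul_apply, Matrix.diagonal_apply, metF_of_ne hij, hij]

lemma pd_metF_of_ne (k : Fin 4) {i j : Fin 4} (hij : i ≠ j) (p : Fin 4 → ℝ) :
    pd k (metF i j) p = 0 :=
  pd_eq_zero_of_forall_update fun _ => by rw [metF_of_ne hij, metF_of_ne hij]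

lemma pd_metF_two_two_of_ne {k : Fin 4} (hk0 : k ≠ 0) (hk2 : k ≠ 2) (p : Fin 4 → ℝ) :
    pd k (metF 2 2) p = 0 :=
  pd_eq_zero_of_forall_update fun _ => by
    simp [metF, update_of_ne hk0.symm, update_of_ne hk2.symm]

lemma pd_zero_metF_zero_zero (h : p 0 ^ 2 + p 0 * p 2 ≠ 0) :
    pd 0 (metF 0 0) p = -(2 * p 0 + p 2) / (p 0 ^ 2 + p 0 * p 2) ^ 2 := by
  have hd : HasDerivAt (fun t => t ^ 2 + t * p 2) (2 * p 0 + p 2) (p 0) := by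
    simpa using (hasDerivAt_pow 2 (p 0)).fun_add ((hasDerivAt_id (p 0)).mul_const (p 2))
  exact pd_eq_of_eventuallyEq (.of_forall fun t => by simp [metF]) (hd.fun_inv h)

lemma pd_two_metF_zero_zero (h : p 0 ^ 2 + p 0 * p 2 ≠ 0) :
    pd 2 (metF 0 0) p = -p 0 / (p 0 ^ 2 + p 0 * p 2) ^ 2 := by
  have hd : HasDerivAt (fun t => p 0 ^ 2 + p 0 * t) (p 0) (p 2) := by
    simpa using ((hasDerivAt_id (p 2)).const_mul (p 0)).const_add (p 0 ^ 2)
  exact pd_eq_of_eventuallyEq (.of_forall fun t => by simp [metF]) (hd.fun_inv h)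

lemma pd_zero_metF_two_two (h : p 2 ^ 2 + p 0 * p 2 ≠ 0) :
    pd 0 (metF 2 2) p = -p 2 / (p 2 ^ 2 + p 0 * p 2) ^ 2 := by
  have hd : HasDerivAt (fun t => p 2 ^ 2 + t * p 2) (p 2) (p 0) := by
    simpa using ((hasDerivAt_id (p 0)).mul_const (p 2)).const_add (p 2 ^ 2)
  exact pd_eq_of_eventuallyEq (.of_forall fun t => by simp [metF]) (hd.fun_inv h)

lemma pd_two_metF_two_two (h : p 2 ^ 2 + p 0 * p 2 ≠ 0) :
    pd 2 (metF 2 2) p = -(2 * p 2 + p 0) / (p 2 ^ 2 + p 0 * p 2) ^ 2 := by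
  have hd : HasDerivAt (fun t => t ^ 2 + p 0 * t) (2 * p 2 + p 0) (p 2) := by
    simpa using (hasDerivAt_pow 2 (p 2)).fun_add ((hasDerivAt_id (p 2)).const_mul (p 0))
  exact pd_eq_of_eventuallyEq (.of_forall fun t => by simp [metF]) (hd.fun_inv h)

end Metric

section Christoffel

variable {p : Fin 4 → ℝ}

lemma lcLow_comm (i j k : Fin 4) (p : Fin 4 → ℝ) : lcLow i j k p = lcLow j i k p := by
  rw [lcLow, lcLow, add_comm (pd i _ p), funext (metF_comm i j)]

lemma lcUp_comm (h i j : Fin 4) (p : Fin 4 → ℝ) : lcUp h i j p = lcUp h j i p := by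
  simp only [lcUp, lcLow_comm i j]

lemma lcUp_eq_div (hp : ∀ i, 0 < p i) (h i j : Fin 4) :
    lcUp h i j p = lcLow i j h p / metF h h p := by
  simp [lcUp, metM_inv_eq_diagonal hp, Matrix.diagonal_apply, div_eq_inv_mul]

lemma lcUp_two_two_of_ne (hp : ∀ i, 0 < p i) {l : Fin 4} (hl0 : l ≠ 0) (hl2 : l ≠ 2) :
    lcUp l 2 2 p = 0 := by
  rw [lcUp_eq_div hp, lcLow, pd_metF_of_ne 2 hl2.symm, pd_metF_two_two_of_ne hl0 hl2]
  simp

lemma lcUp_zero_two_of_ne (hp : ∀ i, 0 < p i) {l : Fin 4} (hl0 : l ≠ 0) (hl2 : l ≠ 2) :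
    lcUp l 0 2 p = 0 := by
  rw [lcUp_eq_div hp, lcLow, pd_metF_of_ne 0 hl2.symm, pd_metF_of_ne 2 hl0.symm,
    pd_metF_of_ne l (by decide : (0 : Fin 4) ≠ 2)]
  simp

lemma lcUp_zero_zero_zero (hp : ∀ i, 0 < p i) :
    lcUp 0 0 0 p = -(2 * p 0 + p 2) / (2 * p 0 * (p 0 + p 2)) := by
  have := hp 0; have := hp 2
  rw [lcUp_eq_div hp, lcLow, pd_zero_metF_zero_zero (by positivity)]
  rw [metF_zero_zero]
  field_simp
  ring

lemma lcUp_zero_zero_two (hp : ∀ i, 0 < p i) :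
    lcUp 0 0 2 p = -1 / (2 * (p 0 + p 2)) := by
  have := hp 0; have := hp 2
  rw [lcUp_eq_div hp, lcLow, pd_two_metF_zero_zero (by positivity),
    pd_metF_of_ne 0 (by decide : (0 : Fin 4) ≠ 2), pd_metF_of_ne 0 (by decide : (2 : Fin 4) ≠ 0)]
  rw [metF_zero_zero]
  field_simp
  ring

lemma lcUp_zero_two_two (hp : ∀ i, 0 < p i) :
    lcUp 0 2 2 p = p 0 / (2 * p 2 * (p 0 + p 2)) := by
  have := hp 0; have := hp 2
  rw [lcUp_eq_div hp, lcLow, pd_zero_metF_two_two (by positivity),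
    pd_metF_of_ne 2 (by decide : (2 : Fin 4) ≠ 0)]
  rw [metF_zero_zero]
  field_simp
  ring

lemma lcUp_two_zero_two (hp : ∀ i, 0 < p i) :
    lcUp 2 0 2 p = -1 / (2 * (p 0 + p 2)) := by
  have := hp 0; have := hp 2
  rw [lcUp_eq_div hp, lcLow, pd_zero_metF_two_two (by positivity),
    pd_metF_of_ne 2 (by decide : (0 : Fin 4) ≠ 2)]
  rw [metF_two_two]
  field_simp
  ring

lemma lcUp_two_two_two (hp : ∀ i, 0 < p i) :
    lcUp 2 2 2 p = -(2 * p 2 + p 0) / (2 * p 2 * (p 0 + p 2)) := by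
  have := hp 0; have := hp 2
  rw [lcUp_eq_div hp, lcLow, pd_two_metF_two_two (by positivity)]
  rw [metF_two_two]
  field_simp
  ring

end Christoffel

section Curvature

variable {p : Fin 4 → ℝ}

lemma pd_zero_lcUp_zero_two_two (hp : ∀ i, 0 < p i) :
    pd 0 (lcUp 0 2 2) p = 1 / (2 * (p 0 + p 2) ^ 2) := by
  have := hp 0; have := hp 2
  have hd : HasDerivAt (fun t => t / (2 * p 2 * (t + p 2))) (1 / (2 * (p 0 + p 2) ^ 2)) (p 0) := by
    refine (hasDerivAt_id' (p 0)).fun_div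
      (((hasDerivAt_id' (p 0)).add_const (p 2)).const_mul (2 * p 2)) (by positivity)
      |>.congr_deriv ?_
    field_simp
    ring
  refine pd_eq_of_eventuallyEq ?_ hd
  filter_upwards [eventually_update_pos hp 0] with t ht
  simp [lcUp_zero_two_two ht]

lemma pd_two_lcUp_zero_zero_two (hp : ∀ i, 0 < p i) :
    pd 2 (lcUp 0 0 2) p = 1 / (2 * (p 0 + p 2) ^ 2) := by
  have := hp 0; have := hp 2
  have hd : HasDerivAt (fun t => -1 / (2 * (p 0 + t))) (1 / (2 * (p 0 + p 2) ^ 2)) (p 2) := by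
    refine (hasDerivAt_const (p 2) (-1 : ℝ)).fun_div
      (((hasDerivAt_id' (p 2)).const_add (p 0)).const_mul 2) (by positivity)
      |>.congr_deriv ?_
    field_simp
    ring
  refine pd_eq_of_eventuallyEq ?_ hd
  filter_upwards [eventually_update_pos hp 2] with t ht
  simp [lcUp_zero_zero_two ht]

lemma riem_zero_zero_two_two (hp : ∀ i, 0 < p i) : riem 0 0 2 2 p = 0 := by
  have := hp 0; have := hp 2
  rw [riem, Fin.sum_univ_four, pd_zero_lcUp_zero_two_two hp, pd_two_lcUp_zero_zero_two hp,
    lcUp_comm 0 2 0, lcUp_two_two_of_ne hp (l := 1) (by decide) (by decide),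
    lcUp_two_two_of_ne hp (l := 3) (by decide) (by decide),
    lcUp_zero_two_of_ne hp (l := 1) (by decide) (by decide),
    lcUp_zero_two_of_ne hp (l := 3) (by decide) (by decide),
    lcUp_zero_zero_zero hp, lcUp_zero_zero_two hp, lcUp_zero_two_two hp,
    lcUp_two_zero_two hp, lcUp_two_two_two hp]
  field_simp
  ring

lemma sec_eq_riem_div (hp : ∀ i, 0 < p i) {i j : Fin 4} (hij : i ≠ j) :
    sec i j p = riem i i j j p / metF j j p := by
  rw [sec, Finset.sum_eq_single i (fun l _ hli => by rw [metF_of_ne hli.symm, zero_mul])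
    (by simp), metF_of_ne hij]
  rw [sq, zero_mul, sub_zero, mul_div_mul_left _ _ (metF_pos hp i).ne']

end Curvature

theorem freund_sectional_alpha_plane (p : Fin 4 → ℝ) (hp : ∀ i, 0 < p i) :
    sec 0 2 p = 0 := by
  rw [sec_eq_riem_div hp (by decide), riem_zero_zero_two_two hp, zero_div]
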